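/- arXiv:2105.03002 — 2 statements merged into one kernel-verified Lean document; each statement's English description precedes it below -/
import Mathlib

section
/- Let Ω ⊆ ℝ² be open, let f : ℝ² → ℝ, and let p : ℝ² → ℝ be twice continuously differentiable with −Δp = f at every point of Ω. Then for every continuously differentiable v : ℝ² → ℝ whose (compact) support is contained in Ω, one has ∫_{ℝ²} ∇v·∇p = ∫_{ℝ²} f·v. (This is the derivation of the weak formulation ∫_Ω ∇v·∇p = ∫_Ω f v from the strong form of the Laplace problem, for test functions vanishing on the boundary.) -/
open MeasureTheory RealInnerProductSpace

noncomputable abbrev E2 : Type := EuclideanSpace ℝ (Fin 2)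

/-- The Laplacian `∂²p/∂x² + ∂²p/∂y²` of `p : ℝ² → ℝ`. -/
noncomputable def laplacian2 (p : E2 → ℝ) (x : E2) : ℝ :=
  ∑ i : Fin 2,
    fderiv ℝ (fun y => fderiv ℝ p y (EuclideanSpace.single i (1 : ℝ))) x
      (EuclideanSpace.single i (1 : ℝ))

/-!
Expand `⟪∇v, ∇p⟫` in an orthonormal basis and integrate each term `∂ᵢv ∂ᵢp` by parts; the
boundary terms vanish because `v` has compact support, which leaves `∫ -(Δp) v`. Since `v`
vanishes off `tsupport v ⊆ Ω`, the strong equation `-Δp = f` may be used under the integral.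
-/

section WeakFormulation

variable {E : Type*} [NormedAddCommGroup E] [InnerProductSpace ℝ E] {ι : Type*} [Fintype ι]

/-- For an orthonormal basis `b` and `p` of class `C²`, this is the Laplacian of `p`. -/
noncomputable def basisLaplacian (b : ι → E) (p : E → ℝ) (x : E) : ℝ :=
  ∑ i, fderiv ℝ (fun y => fderiv ℝ p y (b i)) x (b i)

theorem inner_gradient_eq_sum_fderiv_mul [CompleteSpace E] (b : OrthonormalBasis ι ℝ E)
    (u w : E → ℝ) (x : E) :
    ⟪gradient u x, gradient w x⟫ = ∑ i, fderiv ℝ u x (b i) * fderiv ℝ w x (b i) := by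
  rw [← b.sum_inner_mul_inner]
  congr 1 with i
  rw [real_inner_comm (gradient w x), inner_gradient_left, inner_gradient_left]

variable [MeasurableSpace E] [BorelSpace E] [FiniteDimensional ℝ E]
  (μ : Measure E) [μ.IsAddHaarMeasure]

theorem integral_fderiv_mul_eq_neg_integral_fderiv_mul {u v : E → ℝ} (hu : ContDiff ℝ 1 u)
    (hv : ContDiff ℝ 1 v) (hcv : HasCompactSupport v) (w : E) :
    ∫ x, fderiv ℝ v x w * u x ∂μ = -∫ x, fderiv ℝ u x w * v x ∂μ := by
  have hu' : Continuous fun x => fderiv ℝ u x w :=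
    (hu.continuous_fderiv one_ne_zero).clm_apply continuous_const
  have hv' : Continuous fun x => fderiv ℝ v x w :=
    (hv.continuous_fderiv one_ne_zero).clm_apply continuous_const
  simp_rw [mul_comm (fderiv ℝ v _ w)]
  exact integral_mul_fderiv_eq_neg_fderiv_mul_of_integrable
    ((hu'.mul hv.continuous).integrable_of_hasCompactSupport hcv.mul_left)
    ((hu.continuous.mul hv').integrable_of_hasCompactSupport
      (hcv.fderiv_apply (𝕜 := ℝ) w).mul_left)
    ((hu.continuous.mul hv.continuous).integrable_of_hasCompactSupport hcv.mul_left)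
    (fun x _ => (hu.differentiable one_ne_zero).differentiableAt)
    (fun x _ => (hv.differentiable one_ne_zero).differentiableAt)

theorem integral_inner_gradient_eq_integral_neg_basisLaplacian_mul
    (b : OrthonormalBasis ι ℝ E) {p v : E → ℝ} (hp : ContDiff ℝ 2 p) (hv : ContDiff ℝ 1 v)
    (hcv : HasCompactSupport v) :
    ∫ x, ⟪gradient v x, gradient p x⟫ ∂μ = ∫ x, -basisLaplacian b p x * v x ∂μ := by
  have hp' (i : ι) : ContDiff ℝ 1 fun y => fderiv ℝ p y (b i) :=
    (hp.fderiv_right (m := 1) le_rfl).clm_apply contDiff_const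
  have hp'' (i : ι) : Continuous fun x => fderiv ℝ (fun y => fderiv ℝ p y (b i)) x (b i) :=
    ((hp' i).continuous_fderiv one_ne_zero).clm_apply continuous_const
  have hv' (i : ι) : Continuous fun x => fderiv ℝ v x (b i) :=
    (hv.continuous_fderiv one_ne_zero).clm_apply continuous_const
  calc ∫ x, ⟪gradient v x, gradient p x⟫ ∂μ
      = ∫ x, ∑ i, fderiv ℝ v x (b i) * fderiv ℝ p x (b i) ∂μ := by
        simp_rw [inner_gradient_eq_sum_fderiv_mul b]
    _ = ∑ i, ∫ x, fderiv ℝ v x (b i) * fderiv ℝ p x (b i) ∂μ :=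
        integral_finsetSum _ fun i _ =>
          ((hv' i).mul (hp' i).continuous).integrable_of_hasCompactSupport
            (hcv.fderiv_apply (𝕜 := ℝ) (b i)).mul_right
    _ = ∑ i, ∫ x, -(fderiv ℝ (fun y => fderiv ℝ p y (b i)) x (b i) * v x) ∂μ := by
        congr 1 with i
        rw [integral_neg, integral_fderiv_mul_eq_neg_integral_fderiv_mul μ (hp' i) hv hcv]
    _ = ∫ x, -basisLaplacian b p x * v x ∂μ := by
        have hint (i : ι) : Integrable
            (fun x => -(fderiv ℝ (fun y => fderiv ℝ p y (b i)) x (b i) * v x)) μ :=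
          (((hp'' i).mul hv.continuous).integrable_of_hasCompactSupport hcv.mul_left).neg
        rw [← integral_finsetSum _ fun i _ => hint i]
        simp only [basisLaplacian, Finset.sum_mul, Finset.sum_neg_distrib, neg_mul]

end WeakFormulation

theorem weak_formulation_of_strong_general
    (Ω : Set E2) (f : E2 → ℝ) (p : E2 → ℝ)
    (hp : ContDiff ℝ 2 p) (hpf : ∀ x ∈ Ω, -laplacian2 p x = f x) :
    ∀ v : E2 → ℝ, ContDiff ℝ 1 v → HasCompactSupport v → tsupport v ⊆ Ω →
      ∫ x : E2, ⟪gradient v x, gradient p x⟫ = ∫ x : E2, f x * v x := by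
  intro v hv hcv hsv
  have hΔ : laplacian2 p = basisLaplacian (EuclideanSpace.basisFun (Fin 2) ℝ) p := by
    ext x
    simp [laplacian2, basisLaplacian]
  rw [integral_inner_gradient_eq_integral_neg_basisLaplacian_mul volume
    (EuclideanSpace.basisFun (Fin 2) ℝ) hp hv hcv, ← hΔ]
  congr 1 with x
  by_cases hx : x ∈ tsupport v
  · rw [hpf x (hsv hx)]
  · simp [image_eq_zero_of_notMem_tsupport hx]

theorem weak_formulation_of_strong
    (Ω : Set E2) (hΩ : IsOpen Ω) (f : E2 → ℝ) (p : E2 → ℝ)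
    (hp : ContDiff ℝ 2 p) (hpf : ∀ x ∈ Ω, -laplacian2 p x = f x) :
    ∀ v : E2 → ℝ, ContDiff ℝ 1 v → HasCompactSupport v → tsupport v ⊆ Ω →
      ∫ x : E2, ⟪gradient v x, gradient p x⟫ = ∫ x : E2, f x * v x :=
  weak_formulation_of_strong_general Ω f p hp hpf
end

section
/- Let a₁ < b₁ and a₂ < b₂ be real numbers and let R = [a₁,b₁] × [a₂,b₂] ⊆ ℝ². Let p : ℝ² → ℝ be twice continuously differentiable and v : ℝ² → ℝ continuously differentiable. Then −∫_R (Δp)·v = ∫_R ∇v·∇p − ( ∫_{a₂}^{b₂} v(b₁,y)·∂p/∂x(b₁,y) dy − ∫_{a₂}^{b₂} v(a₁,y)·∂p/∂x(a₁,y) dy + ∫_{a₁}^{b₁} v(x,b₂)·∂p/∂y(x,b₂) dx − ∫_{a₁}^{b₁} v(x,a₂)·∂p/∂y(x,a₂) dx ). (This is Green's formula −∫_Ω Δp v = ∫_Ω ∇v·∇p − ∫_Γ v ∇p·η, with the boundary integral over Γ written out explicitly over the four sides of the rectangle R with outward unit normal η.) -/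
open MeasureTheory

/-- Partial derivative in the `x`-direction of `p : ℝ² → ℝ`. -/
noncomputable def pdx (p : ℝ × ℝ → ℝ) (z : ℝ × ℝ) : ℝ :=
  fderiv ℝ p z (1, 0)

/-- Partial derivative in the `y`-direction of `p : ℝ × ℝ → ℝ`. -/
noncomputable def pdy (p : ℝ × ℝ → ℝ) (z : ℝ × ℝ) : ℝ :=
  fderiv ℝ p z (0, 1)

/-- The Laplacian `∂²p/∂x² + ∂²p/∂y²` of `p : ℝ² → ℝ`. -/
noncomputable def lap (p : ℝ × ℝ → ℝ) (z : ℝ × ℝ) : ℝ :=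
  pdx (pdx p) z + pdy (pdy p) z

/-! Apply the divergence theorem on the rectangle to the field `(v ∂p/∂x, v ∂p/∂y)`: by the
product rule its divergence is `Δp · v + ∇v · ∇p`, and its outward normal flux through the four
sides is the boundary term. -/

section PartialDerivatives

variable {p v q : ℝ × ℝ → ℝ} {n m : WithTop ℕ∞}

theorem ContDiff.contDiff_pdx (hp : ContDiff ℝ n p) (hmn : m + 1 ≤ n) : ContDiff ℝ m (pdx p) :=
  (hp.fderiv_right hmn).clm_apply contDiff_const

theorem ContDiff.contDiff_pdy (hp : ContDiff ℝ n p) (hmn : m + 1 ≤ n) : ContDiff ℝ m (pdy p) :=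
  (hp.fderiv_right hmn).clm_apply contDiff_const

theorem ContDiff.continuous_pdx (hp : ContDiff ℝ n p) (hn : n ≠ 0) : Continuous (pdx p) :=
  (hp.continuous_fderiv hn).clm_apply continuous_const

theorem ContDiff.continuous_pdy (hp : ContDiff ℝ n p) (hn : n ≠ 0) : Continuous (pdy p) :=
  (hp.continuous_fderiv hn).clm_apply continuous_const

theorem pdx_mul {z : ℝ × ℝ} (hv : DifferentiableAt ℝ v z) (hq : DifferentiableAt ℝ q z) :
    pdx (fun z => v z * q z) z = pdx v z * q z + v z * pdx q z := by
  simp only [pdx, fderiv_fun_mul hv hq, add_apply, smul_apply, smul_eq_mul]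
  ring

theorem pdy_mul {z : ℝ × ℝ} (hv : DifferentiableAt ℝ v z) (hq : DifferentiableAt ℝ q z) :
    pdy (fun z => v z * q z) z = pdy v z * q z + v z * pdy q z := by
  simp only [pdy, fderiv_fun_mul hv hq, add_apply, smul_apply, smul_eq_mul]
  ring

theorem ContDiff.continuous_lap (hp : ContDiff ℝ n p) (hn : 2 ≤ n) : Continuous (lap p) :=
  have hn' : 1 + 1 ≤ n := by rwa [one_add_one_eq_two]
  ((hp.contDiff_pdx hn').continuous_pdx one_ne_zero).add
    ((hp.contDiff_pdy hn').continuous_pdy one_ne_zero)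

theorem pdx_mul_pdx_add_pdy_mul_pdy {z : ℝ × ℝ} (hv : DifferentiableAt ℝ v z)
    (hpx : DifferentiableAt ℝ (pdx p) z) (hpy : DifferentiableAt ℝ (pdy p) z) :
    pdx (fun z => v z * pdx p z) z + pdy (fun z => v z * pdy p z) z =
      lap p z * v z + (pdx v z * pdx p z + pdy v z * pdy p z) := by
  rw [pdx_mul hv hpx, pdy_mul hv hpy, lap]
  ring

end PartialDerivatives

theorem integral_pdx_add_pdy_prod_Icc {f g : ℝ × ℝ → ℝ} {a₁ b₁ a₂ b₂ : ℝ}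
    (h₁ : a₁ ≤ b₁) (h₂ : a₂ ≤ b₂) (hf : Differentiable ℝ f) (hg : Differentiable ℝ g)
    (hi : IntegrableOn (fun z => pdx f z + pdy g z) (Set.Icc a₁ b₁ ×ˢ Set.Icc a₂ b₂)) :
    ∫ z in Set.Icc a₁ b₁ ×ˢ Set.Icc a₂ b₂, pdx f z + pdy g z =
      (∫ y in a₂..b₂, f (b₁, y)) - (∫ y in a₂..b₂, f (a₁, y)) +
        (∫ x in a₁..b₁, g (x, b₂)) - (∫ x in a₁..b₁, g (x, a₂)) := by
  rw [Set.Icc_prod_Icc] at hi ⊢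
  refine (integral_divergence_prod_Icc_of_hasFDerivAt_of_le f g (fderiv ℝ f) (fderiv ℝ g)
    (a₁, a₂) (b₁, b₂) ⟨h₁, h₂⟩ hf.continuous.continuousOn hg.continuous.continuousOn
    (fun z _ => (hf z).hasFDerivAt) (fun z _ => (hg z).hasFDerivAt) hi).trans ?_
  ring

theorem greens_formula_rectangle
    (a₁ b₁ a₂ b₂ : ℝ) (h₁ : a₁ < b₁) (h₂ : a₂ < b₂)
    (p v : ℝ × ℝ → ℝ) (hp : ContDiff ℝ 2 p) (hv : ContDiff ℝ 1 v) :
    -∫ z in Set.Icc a₁ b₁ ×ˢ Set.Icc a₂ b₂, lap p z * v z =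
      (∫ z in Set.Icc a₁ b₁ ×ˢ Set.Icc a₂ b₂, pdx v z * pdx p z + pdy v z * pdy p z) -
        ((∫ y in a₂..b₂, v (b₁, y) * pdx p (b₁, y)) -
          (∫ y in a₂..b₂, v (a₁, y) * pdx p (a₁, y)) +
          (∫ x in a₁..b₁, v (x, b₂) * pdy p (x, b₂)) -
          (∫ x in a₁..b₁, v (x, a₂) * pdy p (x, a₂))) := by
  have hpx : ContDiff ℝ 1 (pdx p) := hp.contDiff_pdx (by norm_num)
  have hpy : ContDiff ℝ 1 (pdy p) := hp.contDiff_pdy (by norm_num)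
  have hv' := hv.differentiable one_ne_zero
  have hpx' := hpx.differentiable one_ne_zero
  have hpy' := hpy.differentiable one_ne_zero
  have hdiv := fun z => pdx_mul_pdx_add_pdy_mul_pdy (hv' z) (hpx' z) (hpy' z)
  set R := Set.Icc a₁ b₁ ×ˢ Set.Icc a₂ b₂
  have hR : IsCompact R := isCompact_Icc.prod isCompact_Icc
  have hlap : IntegrableOn (fun z => lap p z * v z) R :=
    ((hp.continuous_lap le_rfl).mul hv.continuous).continuousOn.integrableOn_compact hR
  have hgrad : IntegrableOn (fun z => pdx v z * pdx p z + pdy v z * pdy p z) R :=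
    (((hv.continuous_pdx one_ne_zero).mul hpx.continuous).add
      ((hv.continuous_pdy one_ne_zero).mul hpy.continuous)).continuousOn.integrableOn_compact hR
  have hgreen := integral_pdx_add_pdy_prod_Icc (f := fun z => v z * pdx p z)
    (g := fun z => v z * pdy p z) h₁.le h₂.le (hv'.mul hpx') (hv'.mul hpy')
    ((hlap.add hgrad).congr_fun (fun z _ => (hdiv z).symm) hR.measurableSet)
  rw [funext hdiv, integral_add hlap hgrad] at hgreen
  linarith
end
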